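/- arXiv:1211.3768 — 4 statements merged into one kernel-verified Lean document; each statement's English description precedes it below -/
import Mathlib

section
/- Let (a_0, ..., a_n) be a sequence of real numbers and let A be the n×n symmetric tridiagonal matrix with diagonal entries A_{ii} = a_{i-1} + a_i for i = 1,...,n, off-diagonal entries A_{i,i+1} = A_{i+1,i} = -a_i, and all other entries zero. Then det(A) = Σ_{j=0}^{n} ∏_{i≠j} a_i. In particular, if all a_i are nonzero, det(A) = (∏_{i=0}^{n} a_i)·(Σ_{i=0}^{n} a_i^{-1}). -/
/-!
Adding all columns of `A` to the first one replaces it by the boundary column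
`(a₀, 0, …, 0, aₘ)ᵀ`, because a constant field has zero gradient away from the boundary.
Expanding along that column gives the recurrence
`det A(a₀, …, aₘ) = a₀ · det A(a₁, …, aₘ) + a₁ ⋯ aₘ`: the second minor is triangular with
diagonal `-a₁, …, -aₘ₋₁`, and its sign cancels the one from the expansion.
The sum `∑ⱼ ∏_{i ≠ j} aᵢ` satisfies the same recurrence.
-/

open Finset Matrix

theorem Fin.prod_univ_erase {M : Type*} [CommMonoid M] {n : ℕ} (f : Fin (n + 1) → M)
    (j : Fin (n + 1)) : ∏ i ∈ univ.erase j, f i = ∏ i : Fin n, f (j.succAbove i) := by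
  rw [Fin.univ_succAbove n j, erase_cons, prod_map]
  rfl

theorem Finset.sum_prod_erase_eq_prod_mul_sum_inv {ι K : Type*} [DecidableEq ι] [Field K]
    (s : Finset ι) (f : ι → K) (hf : ∀ i ∈ s, f i ≠ 0) :
    ∑ j ∈ s, ∏ i ∈ s.erase j, f i = (∏ i ∈ s, f i) * ∑ i ∈ s, (f i)⁻¹ := by
  rw [mul_sum]
  refine sum_congr rfl fun j hj => ?_
  rw [← mul_prod_erase s f hj, mul_comm (f j), mul_assoc, mul_inv_cancel₀ (hf j hj), mul_one]

variable {R : Type*} [CommRing R]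

theorem sum_prod_succAbove_succ {n : ℕ} (a : Fin (n + 2) → R) :
    ∑ j : Fin (n + 2), ∏ i : Fin (n + 1), a (j.succAbove i)
      = a 0 * ∑ j : Fin (n + 1), ∏ i : Fin n, a (j.succAbove i).succ
        + ∏ i : Fin (n + 1), a i.succ := by
  rw [Fin.sum_univ_succ, add_comm, mul_sum]
  simp [Fin.prod_univ_succ]

theorem Matrix.det_updateCol_zero_single {n : ℕ} (M : Matrix (Fin (n + 1)) (Fin (n + 1)) R)
    (k : Fin (n + 1)) (c : R) :
    (M.updateCol 0 (Pi.single k c)).det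
      = (-1) ^ (k : ℕ) * c * (M.submatrix k.succAbove Fin.succ).det := by
  rw [det_succ_column_zero, sum_eq_single k (fun i _ hi => by simp [hi]) (by simp),
    updateCol_self, Pi.single_eq_same, ← Fin.succAbove_zero, submatrix_updateCol_succAbove]

def gradientMatrix {n : ℕ} (a : Fin (n + 1) → R) : Matrix (Fin n) (Fin n) R :=
  Matrix.of fun i j =>
    if i = j then a i.castSucc + a i.succ
    else if (j : ℕ) = (i : ℕ) + 1 then -a i.succ
    else if (i : ℕ) = (j : ℕ) + 1 then -a j.succ
    else 0

theorem gradientMatrix_apply {n : ℕ} (a : Fin (n + 1) → R) (i j : Fin n) :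
    gradientMatrix a i j = (if j = i then a i.castSucc + a i.succ else 0)
      - (if j.castSucc = i.succ then a i.succ else 0)
      - (if j.succ = i.castSucc then a i.castSucc else 0) := by
  simp only [gradientMatrix, of_apply, Fin.ext_iff, Fin.val_succ, Fin.val_castSucc]
  split_ifs <;>
    first
    | omega
    | ring1
    | (rw [show j.succ = i.castSucc from Fin.ext (by simp; omega)]; ring)

theorem gradientMatrix_submatrix_succ_succ {n : ℕ} (a : Fin (n + 2) → R) :
    (gradientMatrix a).submatrix Fin.succ Fin.succ = gradientMatrix fun i => a i.succ := by
  ext i j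
  simp only [gradientMatrix, of_apply, submatrix_apply, Fin.succ_inj, Fin.val_succ,
    Nat.add_right_cancel_iff]
  rfl

theorem det_gradientMatrix_submatrix_castSucc_succ {n : ℕ} (a : Fin (n + 2) → R) :
    ((gradientMatrix a).submatrix Fin.castSucc Fin.succ).det
      = (-1) ^ n * ∏ i : Fin n, a i.castSucc.succ := by
  have signs := prod_neg (s := univ) fun i : Fin n => a i.castSucc.succ
  rw [card_univ, Fintype.card_fin] at signs
  rw [det_of_isLowerTriangular, ← signs]
  · refine prod_congr rfl fun i _ => ?_
    simp [gradientMatrix, Fin.ext_iff]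
  · intro i j hij
    have : (i : ℕ) < j := hij
    simp only [gradientMatrix, of_apply, submatrix_apply, Fin.ext_iff, Fin.val_castSucc,
      Fin.val_succ]
    split_ifs <;> first | rfl | omega

theorem sum_gradientMatrix_row {n : ℕ} (a : Fin (n + 2) → R) :
    (fun i => ∑ j, gradientMatrix a i j)
      = Pi.single 0 (a 0) + Pi.single (Fin.last n) (a (Fin.last (n + 1))) := by
  ext i
  have superdiagonal : ∑ j : Fin (n + 1), (if j.castSucc = i.succ then a i.succ else 0)
      = a i.succ - if i = Fin.last n then a i.succ else 0 := by
    have := Fin.sum_univ_castSucc fun k => if k = i.succ then a i.succ else 0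
    simp only [sum_ite_eq', mem_univ, if_true, eq_comm (a := Fin.last _),
      Fin.succ_eq_last_succ] at this
    linear_combination -this
  have subdiagonal : ∑ j : Fin (n + 1), (if j.succ = i.castSucc then a i.castSucc else 0)
      = a i.castSucc - if i = 0 then a i.castSucc else 0 := by
    have := Fin.sum_univ_succ fun k => if k = i.castSucc then a i.castSucc else 0
    simp only [sum_ite_eq', mem_univ, if_true, eq_comm (a := (0 : Fin _)),
      Fin.castSucc_eq_zero_iff] at this
    linear_combination -this
  simp only [gradientMatrix_apply, sum_sub_distrib, sum_ite_eq', mem_univ, if_true,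
    superdiagonal, subdiagonal, Pi.add_apply, Pi.single_apply]
  have at_zero : i = 0 → a i.castSucc = a 0 := by rintro rfl; rfl
  have at_last : i = Fin.last n → a i.succ = a (Fin.last (n + 1)) := by rintro rfl; rfl
  split_ifs with hl h0 h0
  · rw [at_zero h0, at_last hl]; ring
  · rw [at_last hl]; ring
  · rw [at_zero h0]; ring
  · ring

theorem det_gradientMatrix_succ {n : ℕ} (a : Fin (n + 2) → R) :
    (gradientMatrix a).det
      = a 0 * (gradientMatrix fun i => a i.succ).det + ∏ i : Fin (n + 1), a i.succ := by
  have add_columns := det_updateCol_sum (gradientMatrix a) 0 1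
  simp only [Pi.one_apply, one_smul, sum_gradientMatrix_row, det_updateCol_add,
    det_updateCol_zero_single, Fin.succAbove_zero, Fin.succAbove_last,
    gradientMatrix_submatrix_succ_succ, det_gradientMatrix_submatrix_castSucc_succ] at add_columns
  rw [← add_columns, Fin.prod_univ_castSucc]
  simp only [Fin.val_zero, pow_zero, one_mul, Fin.val_last, Fin.succ_last]
  have sign : ((-1 : R) ^ n) * (-1) ^ n = 1 := by rw [← pow_add, Even.neg_one_pow ⟨n, rfl⟩]
  linear_combination (∏ i : Fin n, a i.castSucc.succ) * a (Fin.last (n + 1)) * sign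

theorem det_gradientMatrix {n : ℕ} (a : Fin (n + 1) → R) :
    (gradientMatrix a).det = ∑ j, ∏ i ∈ univ.erase j, a i := by
  simp only [Fin.prod_univ_erase]
  induction n with
  | zero => simp
  | succ n ih => rw [det_gradientMatrix_succ, ih, sum_prod_succAbove_succ]

/-- Determinant of the symmetric tridiagonal gradient-form matrix with weights
`a 0, ..., a n`. Rows/columns are indexed by `Fin n` (zero-based, corresponding
to one-based indices `1, ..., n`). -/
theorem det_gradient_tridiagonal (n : ℕ) (a : Fin (n + 1) → ℝ) :
    (Matrix.of fun i j : Fin n =>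
        if i = j then a i.castSucc + a i.succ
        else if (j : ℕ) = (i : ℕ) + 1 then -a i.succ
        else if (i : ℕ) = (j : ℕ) + 1 then -a j.succ
        else 0).det
      = ∑ j : Fin (n + 1), ∏ i ∈ Finset.univ.erase j, a i ∧
    ((∀ i, a i ≠ 0) →
      (Matrix.of fun i j : Fin n =>
        if i = j then a i.castSucc + a i.succ
        else if (j : ℕ) = (i : ℕ) + 1 then -a i.succ
        else if (i : ℕ) = (j : ℕ) + 1 then -a j.succ
        else 0).det = (∏ i, a i) * ∑ i, (a i)⁻¹) :=
  ⟨det_gradientMatrix a, fun ha =>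
    (det_gradientMatrix a).trans (sum_prod_erase_eq_prod_mul_sum_inv univ a fun i _ => ha i)⟩
end

section
/- Let (b_0, ..., b_n) be positive reals and let B be the (n-1)×(n-1) symmetric pentadiagonal matrix given explicitly by: B_{ii} = b_{i-1} + 4b_i + b_{i+1}, B_{i,i+1} = B_{i+1,i} = -2b_i - 2b_{i+1}, B_{i,i+2} = B_{i+2,i} = b_{i+1}, and zero otherwise (indices 1 ≤ i ≤ n-1). Then det(B) = (∏_{i=0}^{n} b_i) · Σ_{k=1}^{n} Σ_{i=0}^{n-k} k² b_i^{-1} b_{i+k}^{-1}. -/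
open Finset

namespace DetBilapAux

open Matrix

lemma sum_if_coe {N : ℕ} (t : ℕ) (f : Fin N → ℝ) :
    (∑ j : Fin N, if (j : ℕ) = t then f j else 0) =
      if h : t < N then f ⟨t, h⟩ else 0 := by
  split_ifs with h
  · rw [Finset.sum_eq_single (⟨t, h⟩ : Fin N)]
    · simp
    · intro j _ hj
      rw [if_neg]
      intro hc
      exact hj (Fin.ext hc)
    · simp
  · apply Finset.sum_eq_zero
    intro j _
    rw [if_neg]
    intro hc
    exact h (hc ▸ j.isLt)

def sten (n : ℕ) (x : ℕ) (m : Fin (n + 1)) : ℝ :=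
  if (m : ℕ) = x then 1 else if (m : ℕ) = x + 1 then -2 else
    if (m : ℕ) = x + 2 then 1 else 0

lemma sten_split (n x : ℕ) (m : Fin (n + 1)) :
    sten n x m = (if (m : ℕ) = x then (1 : ℝ) else 0)
      + (if (m : ℕ) = x + 1 then (-2 : ℝ) else 0)
      + (if (m : ℕ) = x + 2 then (1 : ℝ) else 0) := by
  unfold sten
  split_ifs <;> (try omega) <;> ring

lemma sten_pair (n : ℕ) (h : ℕ → ℝ) (x : ℕ) (hx : x + 2 ≤ n) :
    ∑ m : Fin (n + 1), sten n x m * h m = h x - 2 * h (x + 1) + h (x + 2) := by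
  have : ∀ m : Fin (n+1), sten n x m * h m =
      (if (m : ℕ) = x then h m else 0) + (-2) * (if (m : ℕ) = x + 1 then h m else 0)
        + (if (m : ℕ) = x + 2 then h m else 0) := by
    intro m
    rw [sten_split]
    split_ifs <;> ring
  rw [Finset.sum_congr rfl fun m _ => this m, Finset.sum_add_distrib,
    Finset.sum_add_distrib, ← Finset.mul_sum]
  rw [sum_if_coe x (fun m => h m), sum_if_coe (x+1) (fun m => h m),
    sum_if_coe (x+2) (fun m => h m)]
  rw [dif_pos (by omega : x < n+1), dif_pos (by omega : x+1 < n+1),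
    dif_pos (by omega : x+2 < n+1)]
  ring

lemma sten_sum (n : ℕ) (g : ℕ → ℝ) (x y : ℕ) (hx : x + 2 ≤ n) (hy : y + 2 ≤ n) :
    ∑ m : Fin (n + 1), sten n x m * g m * sten n y m =
      (if x = y then g x + 4 * g (x + 1) + g (x + 2)
        else if y = x + 1 then -2 * g (x + 1) - 2 * g (x + 2)
        else if x = y + 1 then -2 * g (y + 1) - 2 * g (y + 2)
        else if y = x + 2 then g (x + 2)
        else if x = y + 2 then g (y + 2)
        else 0) := by
  have key : ∀ m : Fin (n+1), sten n x m * g m * sten n y m =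
      sten n x m * (fun t : ℕ => g t * (if t = y then (1:ℝ) else if t = y+1 then -2 else if t = y+2 then 1 else 0)) (m : ℕ) := by
    intro m
    show _ = sten n x m * (g m * sten n y m)
    ring
  rw [Finset.sum_congr rfl fun m _ => key m,
    sten_pair n (fun t : ℕ => g t * (if t = y then (1:ℝ) else if t = y+1 then -2 else if t = y+2 then 1 else 0)) x hx]
  split_ifs <;> (try omega) <;> subst_vars <;> ring_nf
variable (n : ℕ) (b : ℕ → ℝ)

def A : Matrix (Fin (n + 1)) (Fin (n - 1)) ℝ := fun m j => sten n (j : ℕ) m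

def Wd : Matrix (Fin (n + 1)) (Fin (n + 1)) ℝ := Matrix.diagonal fun m => b (m : ℕ)

def M1 : Matrix (Fin (n + 1)) (Fin (n - 1) ⊕ Fin 2) ℝ := fun m c =>
  match c with
  | Sum.inl j => sten n (j : ℕ) m
  | Sum.inr r => if (m : ℕ) = n - 1 + (r : ℕ) then 1 else 0

noncomputable def M2 : Matrix (Fin (n + 1)) (Fin (n - 1) ⊕ Fin 2) ℝ := fun m c =>
  match c with
  | Sum.inl j => sten n (j : ℕ) m
  | Sum.inr r => if r = 0 then (b (m : ℕ))⁻¹ else ((m : ℕ) : ℝ) * (b (m : ℕ))⁻¹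

@[simp] lemma M1_inl (m : Fin (n + 1)) (j : Fin (n - 1)) :
    M1 n m (Sum.inl j) = sten n (j : ℕ) m := rfl
@[simp] lemma M1_inr (m : Fin (n + 1)) (r : Fin 2) :
    M1 n m (Sum.inr r) = if (m : ℕ) = n - 1 + (r : ℕ) then 1 else 0 := rfl
@[simp] lemma M2_inl (m : Fin (n + 1)) (j : Fin (n - 1)) :
    M2 n b m (Sum.inl j) = sten n (j : ℕ) m := rfl
@[simp] lemma M2_inr (m : Fin (n + 1)) (r : Fin 2) :
    M2 n b m (Sum.inr r) = if r = 0 then (b (m : ℕ))⁻¹ else ((m : ℕ) : ℝ) * (b (m : ℕ))⁻¹ := rfl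
@[simp] lemma A_apply (m : Fin (n + 1)) (j : Fin (n - 1)) :
    A n m j = sten n (j : ℕ) m := rfl

noncomputable def S (p : ℕ) : ℝ := ∑ m : Fin (n + 1), ((m : ℕ) : ℝ) ^ p * (b (m : ℕ))⁻¹

def eqv (hn : 1 ≤ n) : (Fin (n - 1) ⊕ Fin 2) ≃ Fin (n + 1) :=
  finSumFinEquiv.trans (finCongr (by omega))

lemma triple_apply {ι κ : Type*} [Fintype ι] [Fintype κ]
    (X : Matrix (Fin (n + 1)) ι ℝ) (Y : Matrix (Fin (n + 1)) κ ℝ) (c : ι) (d : κ) :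
    (Xᵀ * Wd n b * Y) c d = ∑ m : Fin (n + 1), X m c * b (m : ℕ) * Y m d := by
  rw [Matrix.mul_apply]
  refine Finset.sum_congr rfl fun m _ => ?_
  rw [Wd, Matrix.mul_diagonal, Matrix.transpose_apply]

lemma eqv_val (hn : 1 ≤ n) (x : Fin (n - 1) ⊕ Fin 2) :
    ((eqv n hn x : Fin (n + 1)) : ℕ)
      = Sum.elim (fun j : Fin (n - 1) => (j : ℕ)) (fun r : Fin 2 => n - 1 + (r : ℕ)) x := by
  cases x <;> simp [eqv]

/-- A stencil column paired with `W⁻¹` times an affine vector gives zero. -/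
lemma sten_orth (hb : ∀ i ≤ n, 0 < b i) (j : Fin (n - 1)) (s : Fin 2) :
    ∑ m : Fin (n + 1), sten n (j : ℕ) m * b (m : ℕ) * M2 n b m (Sum.inr s) = 0 := by
  have hj2 : (j : ℕ) + 2 ≤ n := by have := j.isLt; omega
  have key : ∀ m : Fin (n + 1), sten n (j : ℕ) m * b (m : ℕ) * M2 n b m (Sum.inr s)
      = sten n (j : ℕ) m *
        (fun t : ℕ => b t * (if s = 0 then (b t)⁻¹ else (t : ℝ) * (b t)⁻¹)) (m : ℕ) := by
    intro m
    rw [M2_inr]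
    ring
  rw [Finset.sum_congr rfl fun m _ => key m,
    sten_pair n (fun t : ℕ => b t * (if s = 0 then (b t)⁻¹ else (t : ℝ) * (b t)⁻¹)) (j : ℕ) hj2]
  have h0 := mul_inv_cancel₀ (hb (j : ℕ) (by omega)).ne'
  have h1 := mul_inv_cancel₀ (hb ((j : ℕ) + 1) (by omega)).ne'
  have h2 := mul_inv_cancel₀ (hb ((j : ℕ) + 2) (by omega)).ne'
  rcases Fin.exists_fin_two.mp ⟨s, rfl⟩ with h | h <;> subst h
  · norm_num [h0, h1, h2]
  · simp only [if_neg (by decide : ¬(1 : Fin 2) = 0)]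
    rw [mul_comm (b (j:ℕ)), mul_comm (b ((j:ℕ)+1)), mul_comm (b ((j:ℕ)+2)),
      mul_assoc, mul_assoc, mul_assoc, inv_mul_cancel₀ (hb (j : ℕ) (by omega)).ne',
      inv_mul_cancel₀ (hb ((j : ℕ) + 1) (by omega)).ne',
      inv_mul_cancel₀ (hb ((j : ℕ) + 2) (by omega)).ne']
    push_cast
    ring

lemma G1_eq (hn : 1 ≤ n) (hb : ∀ i ≤ n, 0 < b i) :
    (M1 n)ᵀ * Wd n b * M2 n b
      = Matrix.fromBlocks ((A n)ᵀ * Wd n b * A n) 0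
          (fun r j => ((M1 n)ᵀ * Wd n b * M2 n b) (Sum.inr r) (Sum.inl j))
          !![1, ((n - 1 : ℕ) : ℝ); 1, (n : ℝ)] := by
  ext c d
  rcases c with j | r <;> rcases d with k | s
  · erw [Matrix.fromBlocks_apply₁₁]; rw [triple_apply, triple_apply]
    simp
  · erw [Matrix.fromBlocks_apply₁₂]; rw [triple_apply]
    simp only [M1_inl]
    rw [sten_orth n b hb j s]
    rfl
  · rfl
  · erw [Matrix.fromBlocks_apply₂₂]; rw [triple_apply]
    have key : ∀ m : Fin (n + 1), M1 n m (Sum.inr r) * b (m : ℕ) * M2 n b m (Sum.inr s)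
        = if (m : ℕ) = n - 1 + (r : ℕ) then
            (fun m' : Fin (n + 1) => b (m' : ℕ) *
              (if s = 0 then (b (m' : ℕ))⁻¹ else ((m' : ℕ) : ℝ) * (b (m' : ℕ))⁻¹)) m else 0 := by
      intro m
      rw [M1_inr, M2_inr]
      split_ifs <;> ring
  
    rw [Finset.sum_congr rfl fun m _ => key m,
      sum_if_coe (n - 1 + (r : ℕ))
        (fun m' : Fin (n + 1) => b (m' : ℕ) *
          (if s = 0 then (b (m' : ℕ))⁻¹ else ((m' : ℕ) : ℝ) * (b (m' : ℕ))⁻¹)),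
      dif_pos (by have := r.isLt; omega : n - 1 + (r : ℕ) < n + 1)]
    have hbb : ∀ t, t ≤ n → b t * (b t)⁻¹ = 1 := fun t ht => mul_inv_cancel₀ (hb t ht).ne'
    rcases Fin.exists_fin_two.mp ⟨r, rfl⟩ with h | h <;> subst h <;>
      rcases Fin.exists_fin_two.mp ⟨s, rfl⟩ with h | h <;> subst h <;>
        simp only [Fin.val_zero, Fin.val_one, add_zero, if_pos rfl, if_true, ite_true, reduceIte,
          if_neg (by decide : ¬(1 : Fin 2) = 0), Fin.val_mk]
    · rw [hbb _ (by omega : n - 1 ≤ n)]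
      simp
    · rw [mul_left_comm, hbb _ (by omega : n - 1 ≤ n), mul_one]
      simp
    · have h1 : n - 1 + 1 = n := by omega
      rw [h1, hbb _ le_rfl]
      simp
    · have h1 : n - 1 + 1 = n := by omega
      rw [h1, mul_left_comm, hbb _ le_rfl, mul_one]
      simp

lemma G2_eq (hn : 1 ≤ n) (hb : ∀ i ≤ n, 0 < b i) :
    (M2 n b)ᵀ * Wd n b * M2 n b
      = Matrix.fromBlocks ((A n)ᵀ * Wd n b * A n) 0 0
          !![S n b 0, S n b 1; S n b 1, S n b 2] := by
  ext c d
  rcases c with j | r <;> rcases d with k | s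
  · rw [Matrix.fromBlocks_apply₁₁, triple_apply, triple_apply]
    simp
  · rw [Matrix.fromBlocks_apply₁₂, triple_apply]
    simp only [M2_inl]
    rw [sten_orth n b hb j s]
    rfl
  · rw [Matrix.fromBlocks_apply₂₁, triple_apply]
    have key : ∀ m : Fin (n + 1), M2 n b m (Sum.inr r) * b (m : ℕ) * M2 n b m (Sum.inl k)
        = sten n (k : ℕ) m * b (m : ℕ) * M2 n b m (Sum.inr r) := by
      intro m
      rw [M2_inl]
      ring
    rw [Finset.sum_congr rfl fun m _ => key m, sten_orth n b hb k r]
    rfl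
  · rw [Matrix.fromBlocks_apply₂₂, triple_apply]
    have hbne : ∀ m : Fin (n + 1), b (m : ℕ) ≠ 0 := fun m => (hb _ (by omega)).ne'
    rcases Fin.exists_fin_two.mp ⟨r, rfl⟩ with h | h <;> subst h <;>
      rcases Fin.exists_fin_two.mp ⟨s, rfl⟩ with h | h <;> subst h <;>
        simp only [M2_inr, if_pos rfl, if_true, ite_true, reduceIte,
          if_neg (by decide : ¬(1 : Fin 2) = 0)]
    · have : ∀ m : Fin (n + 1), (b (m : ℕ))⁻¹ * b (m : ℕ) * (b (m : ℕ))⁻¹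
          = ((m : ℕ) : ℝ) ^ 0 * (b (m : ℕ))⁻¹ := by
        intro m
        rw [inv_mul_cancel₀ (hbne m), pow_zero, one_mul]
      rw [Finset.sum_congr rfl fun m _ => this m]
      simp [S]
    · have : ∀ m : Fin (n + 1), (b (m : ℕ))⁻¹ * b (m : ℕ) * (((m : ℕ) : ℝ) * (b (m : ℕ))⁻¹)
          = ((m : ℕ) : ℝ) ^ 1 * (b (m : ℕ))⁻¹ := by
        intro m
        rw [inv_mul_cancel₀ (hbne m), pow_one, one_mul]
      rw [Finset.sum_congr rfl fun m _ => this m]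
      simp [S]
    · have : ∀ m : Fin (n + 1), ((m : ℕ) : ℝ) * (b (m : ℕ))⁻¹ * b (m : ℕ) * (b (m : ℕ))⁻¹
          = ((m : ℕ) : ℝ) ^ 1 * (b (m : ℕ))⁻¹ := by
        intro m
        rw [mul_assoc ((m:ℕ):ℝ), inv_mul_cancel₀ (hbne m), mul_one, pow_one]
      rw [Finset.sum_congr rfl fun m _ => this m]
      simp [S]
    · have : ∀ m : Fin (n + 1), ((m : ℕ) : ℝ) * (b (m : ℕ))⁻¹ * b (m : ℕ) *
          (((m : ℕ) : ℝ) * (b (m : ℕ))⁻¹) = ((m : ℕ) : ℝ) ^ 2 * (b (m : ℕ))⁻¹ := by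
        intro m
        rw [mul_assoc ((m:ℕ):ℝ), inv_mul_cancel₀ (hbne m), mul_one]
        ring
      rw [Finset.sum_congr rfl fun m _ => this m]
      simp [S]

lemma det_P1 (hn : 1 ≤ n) : ((M1 n).submatrix (eqv n hn) id).det = 1 := by
  have hQ : (M1 n).submatrix (eqv n hn) id
      = (((M1 n).submatrix id (eqv n hn).symm).submatrix (eqv n hn) (eqv n hn)) := by
    rw [Matrix.submatrix_submatrix]
    congr 1
    ext c
    simp
  rw [hQ, Matrix.det_submatrix_equiv_self]
  set Q := (M1 n).submatrix id (eqv n hn).symm with hQdef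
  have htri : Q.BlockTriangular OrderDual.toDual := by
    intro i j hij
    have hij' : (i : ℕ) < (j : ℕ) := hij
    have hx := eqv_val n hn ((eqv n hn).symm j)
    rw [Equiv.apply_symm_apply] at hx
    rcases hsj : (eqv n hn).symm j with k | r
    · rw [hsj] at hx
      simp only [Sum.elim_inl] at hx
      simp only [hQdef, Matrix.submatrix_apply, id_eq, hsj, M1_inl, sten]
      split_ifs <;> (first | rfl | (exfalso; omega))
    · rw [hsj] at hx
      simp only [Sum.elim_inr] at hx
      simp only [hQdef, Matrix.submatrix_apply, id_eq, hsj, M1_inr]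
      rw [if_neg (by omega)]
  rw [Matrix.det_of_lowerTriangular Q htri]
  apply Finset.prod_eq_one
  intro m _
  have hx := eqv_val n hn ((eqv n hn).symm m)
  rw [Equiv.apply_symm_apply] at hx
  rcases hsm : (eqv n hn).symm m with k | r
  · rw [hsm] at hx
    simp only [Sum.elim_inl] at hx
    simp only [hQdef, Matrix.submatrix_apply, id_eq, hsm, M1_inl, sten]
    rw [if_pos hx]
  · rw [hsm] at hx
    simp only [Sum.elim_inr] at hx
    simp only [hQdef, Matrix.submatrix_apply, id_eq, hsm, M1_inr]
    rw [if_pos (by omega)]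

lemma shift_eval {N : ℕ} (v : Fin N → ℝ) (t a : ℕ) (c : ℝ) :
    (∑ j : Fin N, (if t = (j : ℕ) + a then c else 0) * v j)
      = if a ≤ t then c * (if h : t - a < N then v ⟨t - a, h⟩ else 0) else 0 := by
  by_cases ha : a ≤ t
  · have key : ∀ j : Fin N, (if t = (j : ℕ) + a then c else 0) * v j
        = (if (j : ℕ) = t - a then c * v j else 0) := by
      intro j
      split_ifs with h1 h2 <;> (first | ring1 | (exfalso; omega))
    rw [Finset.sum_congr rfl fun j _ => key j, sum_if_coe (t - a) (fun j => c * v j),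
      if_pos ha]
    by_cases hN : t - a < N
    · rw [dif_pos hN, dif_pos hN]
    · rw [dif_neg hN, dif_neg hN, mul_zero]
  · rw [if_neg ha]
    apply Finset.sum_eq_zero
    intro j _
    rw [if_neg (by omega), zero_mul]

lemma A_mulVec_apply (v : Fin (n - 1) → ℝ) (t : ℕ) (ht : t < n + 1) :
    (A n).mulVec v ⟨t, ht⟩
      = (if h : t < n - 1 then v ⟨t, h⟩ else 0)
        + (-2) * (if 1 ≤ t then (if h : t - 1 < n - 1 then v ⟨t - 1, h⟩ else 0) else 0)
        + (if 2 ≤ t then (if h : t - 2 < n - 1 then v ⟨t - 2, h⟩ else 0) else 0) := by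
  have expand : (A n).mulVec v ⟨t, ht⟩ = ∑ j : Fin (n - 1), sten n (j : ℕ) ⟨t, ht⟩ * v j := by
    simp [Matrix.mulVec, dotProduct, A]
  rw [expand]
  have key : ∀ j : Fin (n - 1), sten n (j : ℕ) ⟨t, ht⟩ * v j
      = (if t = (j : ℕ) + 0 then (1 : ℝ) else 0) * v j
        + (if t = (j : ℕ) + 1 then (-2 : ℝ) else 0) * v j
        + (if t = (j : ℕ) + 2 then (1 : ℝ) else 0) * v j := by
    intro j
    rw [sten_split]
    simp only [Fin.val_mk, add_zero]
    ring
  rw [Finset.sum_congr rfl fun j _ => key j, Finset.sum_add_distrib, Finset.sum_add_distrib,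
    shift_eval v t 0 1, shift_eval v t 1 (-2), shift_eval v t 2 1]
  simp only [Nat.sub_zero]
  split_ifs <;> (first | ring1 | (exfalso; omega))

lemma A_mulVec_injective (v : Fin (n - 1) → ℝ) (hv : (A n).mulVec v = 0) : v = 0 := by
  have key : ∀ t, (if h : t < n - 1 then v ⟨t, h⟩ else 0) = 0 := by
    intro t
    induction t using Nat.strong_induction_on with
    | _ t ih =>
      by_cases ht : t < n - 1
      · have hrow := congrFun hv ⟨t, by omega⟩
        rw [A_mulVec_apply n v t (by omega), Pi.zero_apply] at hrow
        rcases Nat.lt_or_ge t 1 with h1 | h1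
        · have ht0 : t = 0 := by omega
          subst ht0
          rw [if_neg (by omega), if_neg (by omega)] at hrow
          rw [dif_pos ht] at hrow ⊢
          linarith
        · rcases Nat.lt_or_ge t 2 with h2 | h2
          · have ht1 : t = 1 := by omega
            subst ht1
            rw [if_pos h1, if_neg (by omega)] at hrow
            simp only [Nat.sub_self] at hrow
            rw [ih 0 (by omega)] at hrow
            rw [dif_pos ht] at hrow ⊢
            linarith
          · rw [if_pos h1, if_pos h2, ih (t - 1) (by omega), ih (t - 2) (by omega)] at hrow
            rw [dif_pos ht] at hrow ⊢
            linarith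
      · rw [dif_neg ht]
  funext j
  have := key (j : ℕ)
  rw [dif_pos j.isLt] at this
  simpa using this

lemma detB_ne_zero (hn : 1 ≤ n) (hb : ∀ i ≤ n, 0 < b i) :
    ((A n)ᵀ * Wd n b * A n).det ≠ 0 := by
  intro h0
  obtain ⟨v, hv0, hv⟩ := (Matrix.exists_mulVec_eq_zero_iff).mpr h0
  apply hv0
  have hquad : v ⬝ᵥ ((A n)ᵀ * Wd n b * A n).mulVec v
      = ∑ m : Fin (n + 1), b (m : ℕ) * ((A n).mulVec v m) ^ 2 := by
    rw [← Matrix.mulVec_mulVec, ← Matrix.mulVec_mulVec, Matrix.dotProduct_mulVec,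
      Matrix.vecMul_transpose]
    simp only [dotProduct]
    refine Finset.sum_congr rfl fun m _ => ?_
    rw [Wd, Matrix.mulVec_diagonal]
    ring
  rw [hv, dotProduct_zero] at hquad
  have hz : ∀ m : Fin (n + 1), b (m : ℕ) * ((A n).mulVec v m) ^ 2 = 0 := by
    have hnn : ∀ m ∈ (Finset.univ : Finset (Fin (n + 1))),
        0 ≤ b (m : ℕ) * ((A n).mulVec v m) ^ 2 := fun m _ =>
      mul_nonneg (hb _ (by omega)).le (sq_nonneg _)
    intro m
    exact (Finset.sum_eq_zero_iff_of_nonneg hnn).mp hquad.symm m (Finset.mem_univ m)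
  have hAv : (A n).mulVec v = 0 := by
    funext m
    have := hz m
    have hbm := (hb (m : ℕ) (by omega)).ne'
    have : ((A n).mulVec v m) ^ 2 = 0 := by
      rcases mul_eq_zero.mp this with h | h
      · exact absurd h hbm
      · exact h
    exact pow_eq_zero_iff (by norm_num) |>.mp this
  exact A_mulVec_injective n v hAv


lemma lagrange (N : ℕ) (c : ℕ → ℝ) :
    (∑ i ∈ range (N+1), c i) * (∑ j ∈ range (N+1), (j:ℝ)^2 * c j)
      - (∑ j ∈ range (N+1), (j:ℝ) * c j)^2
    = ∑ k ∈ Icc 1 N, ∑ i ∈ range (N - k + 1), (k:ℝ)^2 * c i * c (i+k) := by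
  classical
  set s := range (N+1) with hs
  set F : ℕ × ℕ → ℝ := fun p => ((p.2:ℝ) - (p.1:ℝ))^2 * c p.1 * c p.2 with hF
  set G : ℕ × ℕ → ℝ := fun p => c p.1 * c p.2 * ((p.2:ℝ)^2 - (p.1:ℝ)*(p.2:ℝ)) with hG
  have hmul : ∀ (f g : ℕ → ℝ),
      (∑ i ∈ s, f i) * (∑ j ∈ s, g j) = ∑ p ∈ s ×ˢ s, f p.1 * g p.2 := by
    intro f g
    rw [Finset.sum_mul_sum, ← Finset.sum_product']
  have hLHS : (∑ i ∈ s, c i) * (∑ j ∈ s, (j:ℝ)^2 * c j) - (∑ j ∈ s, (j:ℝ) * c j)^2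
      = ∑ p ∈ s ×ˢ s, G p := by
    rw [sq, hmul, hmul, ← Finset.sum_sub_distrib]
    exact Finset.sum_congr rfl fun p _ => by simp only [hG]; ring
  have hswap : ∀ (H : ℕ × ℕ → ℝ), ∑ p ∈ s ×ˢ s, H p = ∑ p ∈ s ×ˢ s, H (p.2, p.1) := by
    intro H
    rw [Finset.sum_product, Finset.sum_product]
    exact Finset.sum_comm
  have hdouble : 2 * (∑ p ∈ s ×ˢ s, G p) = ∑ p ∈ s ×ˢ s, F p := by
    rw [two_mul]
    nth_rewrite 2 [hswap G]
    rw [← Finset.sum_add_distrib]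
    exact Finset.sum_congr rfl fun p _ => by simp only [hF, hG]; ring
  -- split the square into strict upper, strict lower (diagonal vanishes)
  set T := (s ×ˢ s).filter (fun p => p.1 < p.2) with hT
  have hsplit : ∑ p ∈ s ×ˢ s, F p = ∑ p ∈ T, F p + ∑ p ∈ (s ×ˢ s).filter (fun p => ¬ p.1 < p.2), F p := by
    rw [Finset.sum_filter_add_sum_filter_not]
  have hlow : ∑ p ∈ (s ×ˢ s).filter (fun p => ¬ p.1 < p.2), F p
      = ∑ p ∈ (s ×ˢ s).filter (fun p => p.2 < p.1), F p := by
    symm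
    apply Finset.sum_subset
    · intro p hp
      simp only [Finset.mem_filter] at hp ⊢
      exact ⟨hp.1, by omega⟩
    · intro p hp hnp
      simp only [Finset.mem_filter] at hp hnp
      have : p.1 = p.2 := by
        by_cases h : p.2 < p.1
        · exact absurd ⟨hp.1, h⟩ hnp
        · omega
      simp only [hF, this, sub_self]
      ring
  have hlow2 : ∑ p ∈ (s ×ˢ s).filter (fun p => p.2 < p.1), F p = ∑ p ∈ T, F p := by
    apply Finset.sum_nbij' (fun p => (p.2, p.1)) (fun p => (p.2, p.1))
    · intro p hp
      simp only [hT, Finset.mem_filter, Finset.mem_product] at hp ⊢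
      exact ⟨⟨hp.1.2, hp.1.1⟩, hp.2⟩
    · intro p hp
      simp only [hT, Finset.mem_filter, Finset.mem_product] at hp ⊢
      exact ⟨⟨hp.1.2, hp.1.1⟩, hp.2⟩
    · intro p _; rfl
    · intro p _; rfl
    · intro p _
      simp only [hF]
      ring
  -- identify sum over T with the RHS double sum
  have hrhs : ∑ k ∈ Icc 1 N, ∑ i ∈ range (N - k + 1), (k:ℝ)^2 * c i * c (i+k)
      = ∑ p ∈ T, F p := by
    rw [← Finset.sum_sigma (Icc 1 N) (fun k => range (N - k + 1))
      (fun q => ((q.1:ℝ))^2 * c q.2 * c (q.2 + q.1))]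
    apply Finset.sum_nbij' (fun q => (q.2, q.2 + q.1)) (fun p => ⟨p.2 - p.1, p.1⟩)
    · intro q hq
      simp only [Finset.mem_sigma, Finset.mem_Icc, Finset.mem_range] at hq
      simp only [hT, Finset.mem_filter, Finset.mem_product, Finset.mem_range, hs]
      omega
    · intro p hp
      simp only [hT, Finset.mem_filter, Finset.mem_product, Finset.mem_range, hs] at hp
      simp only [Finset.mem_sigma, Finset.mem_Icc, Finset.mem_range]
      omega
    · intro q hq
      simp only [Finset.mem_sigma, Finset.mem_Icc, Finset.mem_range] at hq
      simp only []
      congr 1 <;> omega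
    · intro p hp
      simp only [hT, Finset.mem_filter, Finset.mem_product, Finset.mem_range, hs] at hp
      have h2 : p.1 + (p.2 - p.1) = p.2 := by omega
      simp [h2]
    · intro q hq
      simp only [Finset.mem_sigma, Finset.mem_Icc, Finset.mem_range] at hq
      simp only [hF]
      push_cast
      ring
  rw [hLHS, hrhs]
  have := hdouble
  rw [hsplit, hlow, hlow2] at this
  linarith

end DetBilapAux

open DetBilapAux Matrix in
/-- Determinant of the weighted discrete bilaplacian (pentadiagonal) matrix.
Rows/columns are indexed by `Fin (n-1)` (zero-based `i` corresponding to the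
one-based index `i+1`), and the weights are `b 0, ..., b n`. -/
theorem det_bilaplacian_pentadiagonal (n : ℕ) (b : ℕ → ℝ)
    (hn : 1 ≤ n) (hb : ∀ i ≤ n, 0 < b i) :
    (Matrix.of fun i j : Fin (n - 1) =>
        if (i : ℕ) = (j : ℕ) then b i + 4 * b (i + 1) + b (i + 2)
        else if (j : ℕ) = (i : ℕ) + 1 then -2 * b (i + 1) - 2 * b (i + 2)
        else if (i : ℕ) = (j : ℕ) + 1 then -2 * b (j + 1) - 2 * b (j + 2)
        else if (j : ℕ) = (i : ℕ) + 2 then b (i + 2)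
        else if (i : ℕ) = (j : ℕ) + 2 then b (j + 2)
        else 0).det
      = (∏ i ∈ Finset.range (n + 1), b i) *
          ∑ k ∈ Finset.Icc 1 n, ∑ i ∈ Finset.range (n - k + 1),
            (k : ℝ) ^ 2 * (b i)⁻¹ * (b (i + k))⁻¹ := by
  classical
  -- identify the statement matrix with `Aᵀ W A`
  have hBmat : (Matrix.of fun i j : Fin (n - 1) =>
        if (i : ℕ) = (j : ℕ) then b i + 4 * b (i + 1) + b (i + 2)
        else if (j : ℕ) = (i : ℕ) + 1 then -2 * b (i + 1) - 2 * b (i + 2)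
        else if (i : ℕ) = (j : ℕ) + 1 then -2 * b (j + 1) - 2 * b (j + 2)
        else if (j : ℕ) = (i : ℕ) + 2 then b (i + 2)
        else if (i : ℕ) = (j : ℕ) + 2 then b (j + 2)
        else 0) = (A n)ᵀ * Wd n b * A n := by
    ext i j
    have hi2 : (i : ℕ) + 2 ≤ n := by have := i.isLt; omega
    have hj2 : (j : ℕ) + 2 ≤ n := by have := j.isLt; omega
    symm
    rw [triple_apply]
    simp only [A_apply]
    rw [sten_sum n b (i : ℕ) (j : ℕ) hi2 hj2]
    rfl
  rw [hBmat]
  set e := eqv n hn with he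
  set DB := ((A n)ᵀ * Wd n b * A n).det with hDBdef
  set DW := (Wd n b).det with hDWdef
  set P2d := ((M2 n b).submatrix e id).det with hP2def
  have hDWpos : 0 < DW := by
    rw [hDWdef, Wd, Matrix.det_diagonal]
    exact Finset.prod_pos fun m _ => hb _ (by omega)
  have hDBne : DB ≠ 0 := detB_ne_zero n b hn hb
  have hfac : ∀ X : Matrix (Fin (n + 1)) (Fin (n - 1) ⊕ Fin 2) ℝ,
      (X.submatrix e id)ᵀ * ((Wd n b).submatrix e e) * ((M2 n b).submatrix e id)
        = Xᵀ * Wd n b * M2 n b := by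
    intro X
    rw [Matrix.transpose_submatrix, Matrix.submatrix_mul_equiv, Matrix.submatrix_mul_equiv,
      Matrix.submatrix_id_id]
  -- first determinant identity
  have hG1 : DB = DW * P2d := by
    have h1 : ((M1 n)ᵀ * Wd n b * M2 n b).det = DB * 1 := by
      rw [G1_eq n b hn hb]; erw [Matrix.det_fromBlocks_zero₁₂]; rw [← hDBdef]
      congr 1
      rw [Matrix.det_fin_two_of, Nat.cast_sub hn]
      push_cast
      ring
    have h2 : ((M1 n)ᵀ * Wd n b * M2 n b).det = 1 * DW * P2d := by
      rw [← hfac (M1 n), Matrix.det_mul, Matrix.det_mul, Matrix.det_transpose, det_P1 n hn,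
        Matrix.det_submatrix_equiv_self]
    rw [h1] at h2
    linarith [h2]
  -- second determinant identity
  have hG2 : DB * (S n b 0 * S n b 2 - S n b 1 * S n b 1) = P2d * DW * P2d := by
    have h1 : ((M2 n b)ᵀ * Wd n b * M2 n b).det
        = DB * (S n b 0 * S n b 2 - S n b 1 * S n b 1) := by
      rw [G2_eq n b hn hb, Matrix.det_fromBlocks_zero₂₁, ← hDBdef]
      congr 1
      rw [Matrix.det_fin_two_of]
    have h2 : ((M2 n b)ᵀ * Wd n b * M2 n b).det = P2d * DW * P2d := by
      rw [← hfac (M2 n b), Matrix.det_mul, Matrix.det_mul, Matrix.det_transpose,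
        Matrix.det_submatrix_equiv_self]
    rw [h1] at h2
    exact h2
  -- solve for DB
  have hKey : DB = DW * (S n b 0 * S n b 2 - S n b 1 * S n b 1) := by
    have hP2 : P2d = DB / DW := by
      rw [eq_div_iff hDWpos.ne']
      linarith [hG1]
    rw [hP2] at hG2
    have h3 : DB * (S n b 0 * S n b 2 - S n b 1 * S n b 1) = DB * (DB / DW) := by
      rw [hG2]
      field_simp
    have h4 := mul_left_cancel₀ hDBne h3
    rw [h4]
    field_simp
  rw [hKey]
  -- convert to range sums and apply the Lagrange identity
  have hDW : DW = ∏ i ∈ Finset.range (n + 1), b i := by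
    rw [hDWdef, Wd, Matrix.det_diagonal, Fin.prod_univ_eq_prod_range]
  have hS0 : S n b 0 = ∑ i ∈ Finset.range (n + 1), (b i)⁻¹ := by
    rw [S, Fin.sum_univ_eq_sum_range (fun i => ((i : ℕ) : ℝ) ^ 0 * (b i)⁻¹)]
    exact Finset.sum_congr rfl fun i _ => by rw [pow_zero, one_mul]
  have hS1 : S n b 1 = ∑ j ∈ Finset.range (n + 1), (j : ℝ) * (b j)⁻¹ := by
    rw [S, Fin.sum_univ_eq_sum_range (fun i => ((i : ℕ) : ℝ) ^ 1 * (b i)⁻¹)]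
    exact Finset.sum_congr rfl fun i _ => by rw [pow_one]
  have hS2 : S n b 2 = ∑ j ∈ Finset.range (n + 1), (j : ℝ) ^ 2 * (b j)⁻¹ := by
    rw [S, Fin.sum_univ_eq_sum_range (fun i => ((i : ℕ) : ℝ) ^ 2 * (b i)⁻¹)]
  rw [hDW, hS0, hS1, hS2]
  congr 1
  have := lagrange n (fun i => (b i)⁻¹)
  rw [← this, sq]
end

section
/- With B as in the weighted bilaplacian determinant lemma with b_i = 1 for all i, det(B) = (1/12)·N·(N+1)²·(N+2), where B is the (N-1)×(N-1) matrix with constant weights. -/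
open Finset

lemma sum_pin {n : ℕ} (t : ℕ) (f : Fin n → ℝ) :
    (∑ k : Fin n, if (k:ℕ) = t then f k else 0) = if h : t < n then f ⟨t, h⟩ else 0 := by
  split_ifs with h
  · rw [Finset.sum_eq_single (⟨t, h⟩ : Fin n)]
    · simp
    · intro b _ hb
      rw [if_neg]
      simpa [Fin.ext_iff] using hb
    · simp
  · apply Finset.sum_eq_zero
    intro k _
    rw [if_neg]
    have := k.isLt
    omega

/-- upper unit-triangular factor -/
noncomputable def Fm (n : ℕ) : Matrix (Fin n) (Fin n) ℝ :=
  Matrix.of fun i k =>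
    if (k:ℕ) = (i:ℕ) then 1
    else if (k:ℕ) = (i:ℕ) + 1 then -2*((n:ℝ) - 1 - (i:ℕ)) / ((n:ℝ) + 1 - (i:ℕ))
    else if (k:ℕ) = (i:ℕ) + 2 then
      ((n:ℝ) - 2 - (i:ℕ)) * ((n:ℝ) - 1 - (i:ℕ)) / (((n:ℝ) - (i:ℕ)) * ((n:ℝ) + 1 - (i:ℕ)))
    else 0

/-- lower triangular factor -/
noncomputable def Gm (n : ℕ) : Matrix (Fin n) (Fin n) ℝ :=
  Matrix.of fun k j =>
    if (k:ℕ) = (j:ℕ) then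
      ((n:ℝ) + 2 - (k:ℕ)) * ((n:ℝ) + 3 - (k:ℕ)) / (((n:ℝ) - (k:ℕ)) * ((n:ℝ) + 1 - (k:ℕ)))
    else if (k:ℕ) = (j:ℕ) + 1 then -2*((n:ℝ) + 2 - (j:ℕ)) / ((n:ℝ) - (j:ℕ))
    else if (k:ℕ) = (j:ℕ) + 2 then 1
    else 0

lemma entry_eq (n : ℕ) (i j : Fin n) :
    (Fm n * Gm n) i j =
      (if h : (i:ℕ) < n then Gm n ⟨(i:ℕ), h⟩ j else 0)
      + (if h : (i:ℕ) + 1 < n then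
          (-2*((n:ℝ) - 1 - (i:ℕ)) / ((n:ℝ) + 1 - (i:ℕ))) * Gm n ⟨(i:ℕ)+1, h⟩ j else 0)
      + (if h : (i:ℕ) + 2 < n then
          (((n:ℝ) - 2 - (i:ℕ)) * ((n:ℝ) - 1 - (i:ℕ)) / (((n:ℝ) - (i:ℕ)) * ((n:ℝ) + 1 - (i:ℕ))))
            * Gm n ⟨(i:ℕ)+2, h⟩ j else 0) := by
  rw [Matrix.mul_apply]
  have hsplit : ∀ k : Fin n, Fm n i k * Gm n k j =
      (if (k:ℕ) = (i:ℕ) then Gm n k j else 0)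
      + (if (k:ℕ) = (i:ℕ) + 1 then
          (-2*((n:ℝ) - 1 - (i:ℕ)) / ((n:ℝ) + 1 - (i:ℕ))) * Gm n k j else 0)
      + (if (k:ℕ) = (i:ℕ) + 2 then
          (((n:ℝ) - 2 - (i:ℕ)) * ((n:ℝ) - 1 - (i:ℕ)) / (((n:ℝ) - (i:ℕ)) * ((n:ℝ) + 1 - (i:ℕ))))
            * Gm n k j else 0) := by
    intro k
    simp only [Fm, Matrix.of_apply]
    split_ifs <;> (first | (exfalso; omega) | ring)
  rw [Finset.sum_congr rfl fun k _ => hsplit k]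
  rw [Finset.sum_add_distrib, Finset.sum_add_distrib,
    sum_pin (i:ℕ) (fun k => Gm n k j),
    sum_pin ((i:ℕ)+1) (fun k => (-2*((n:ℝ) - 1 - (i:ℕ)) / ((n:ℝ) + 1 - (i:ℕ))) * Gm n k j),
    sum_pin ((i:ℕ)+2) (fun k => (((n:ℝ) - 2 - (i:ℕ)) * ((n:ℝ) - 1 - (i:ℕ)) / (((n:ℝ) - (i:ℕ)) * ((n:ℝ) + 1 - (i:ℕ)))) * Gm n k j)]

set_option maxHeartbeats 3200000 in
lemma mul_eq (n : ℕ) (i j : Fin n) :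
    (Fm n * Gm n) i j =
      if (i : ℕ) = (j : ℕ) then (6 : ℝ)
      else if (j : ℕ) = (i : ℕ) + 1 then -4
      else if (i : ℕ) = (j : ℕ) + 1 then -4
      else if (j : ℕ) = (i : ℕ) + 2 then 1
      else if (i : ℕ) = (j : ℕ) + 2 then 1
      else 0 := by
  have hi := i.isLt
  have hj := j.isLt
  have hiR : ((i:ℕ):ℝ) < n := by exact_mod_cast hi
  have hjR : ((j:ℕ):ℝ) < n := by exact_mod_cast hj
  rw [entry_eq, dif_pos hi]
  simp only [Gm, Matrix.of_apply]
  split_ifs <;>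
    first
      | (exfalso; omega)
      | (push_cast
         have e1 : (n:ℝ) - ((i:ℕ):ℝ) ≠ 0 := sub_ne_zero.mpr (ne_of_gt hiR)
         have e2 : (n:ℝ) + 1 - ((i:ℕ):ℝ) ≠ 0 := sub_ne_zero.mpr (by linarith)
         have e3 : (n:ℝ) - ((j:ℕ):ℝ) ≠ 0 := sub_ne_zero.mpr (ne_of_gt hjR)
         have e4 : (n:ℝ) + 1 - ((j:ℕ):ℝ) ≠ 0 := sub_ne_zero.mpr (by linarith)
         try (have h5 : (i:ℕ) + 1 < n := by omega
              have h5R : ((i:ℕ):ℝ) + 1 < n := by exact_mod_cast h5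
              have e5 : (n:ℝ) - (((i:ℕ):ℝ) + 1) ≠ 0 := sub_ne_zero.mpr (ne_of_gt h5R)
              have e6 : (n:ℝ) + 1 - (((i:ℕ):ℝ) + 1) ≠ 0 := sub_ne_zero.mpr (by linarith))
         try (have h7 : (i:ℕ) + 2 < n := by omega
              have h7R : ((i:ℕ):ℝ) + 2 < n := by exact_mod_cast h7
              have e7 : (n:ℝ) - (((i:ℕ):ℝ) + 2) ≠ 0 := sub_ne_zero.mpr (ne_of_gt h7R)
              have e8 : (n:ℝ) + 1 - (((i:ℕ):ℝ) + 2) ≠ 0 := sub_ne_zero.mpr (by linarith))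
         field_simp
         try (have hrel : (n:ℝ) = ((i:ℕ):ℝ) + 1 := by
                exact_mod_cast (show n = (i:ℕ) + 1 by omega)
              simp only [hrel])
         try (have hrel : (n:ℝ) = ((i:ℕ):ℝ) + 2 := by
                exact_mod_cast (show n = (i:ℕ) + 2 by omega)
              simp only [hrel])
         try (have hrel : ((j:ℕ):ℝ) = ((i:ℕ):ℝ) := by
                exact_mod_cast (show (j:ℕ) = (i:ℕ) by omega)
              simp only [hrel])
         try (have hrel : ((j:ℕ):ℝ) = ((i:ℕ):ℝ) + 1 := by
                exact_mod_cast (show (j:ℕ) = (i:ℕ) + 1 by omega)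
              simp only [hrel])
         try (have hrel : ((j:ℕ):ℝ) = ((i:ℕ):ℝ) + 2 := by
                exact_mod_cast (show (j:ℕ) = (i:ℕ) + 2 by omega)
              simp only [hrel])
         try (have hrel : ((i:ℕ):ℝ) = ((j:ℕ):ℝ) + 1 := by
                exact_mod_cast (show (i:ℕ) = (j:ℕ) + 1 by omega)
              simp only [hrel])
         try (have hrel : ((i:ℕ):ℝ) = ((j:ℕ):ℝ) + 2 := by
                exact_mod_cast (show (i:ℕ) = (j:ℕ) + 2 by omega)
              simp only [hrel])
         try ring)

lemma detF (n : ℕ) : (Fm n).det = 1 := by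
  rw [Matrix.det_of_upperTriangular (M := Fm n)]
  · apply Finset.prod_eq_one
    intro i _
    simp [Fm]
  · intro i j hij
    have : (j:ℕ) < (i:ℕ) := hij
    simp only [Fm, Matrix.of_apply]
    rw [if_neg (by omega), if_neg (by omega), if_neg (by omega)]

lemma prod_tel (n : ℕ) :
    ∏ k ∈ Finset.range n, (((k:ℝ)+3)*((k:ℝ)+4)/(((k:ℝ)+1)*((k:ℝ)+2)))
      = ((n:ℝ)+1)*((n:ℝ)+2)^2*((n:ℝ)+3)/12 := by
  induction n with
  | zero => norm_num
  | succ m ih =>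
    rw [Finset.prod_range_succ, ih]
    have h1 : ((m:ℝ)+1) ≠ 0 := by positivity
    have h2 : ((m:ℝ)+2) ≠ 0 := by positivity
    push_cast
    field_simp
    ring

lemma detG (n : ℕ) :
    (Gm n).det = ((n:ℝ)+1)*((n:ℝ)+2)^2*((n:ℝ)+3)/12 := by
  rw [Matrix.det_of_lowerTriangular (Gm n)]
  · have hdiag : ∀ k : Fin n, Gm n k k =
        (fun t : ℕ => ((n:ℝ) + 2 - t) * ((n:ℝ) + 3 - t) / (((n:ℝ) - t) * ((n:ℝ) + 1 - t))) (k:ℕ) := by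
      intro k
      simp [Gm]
    rw [Finset.prod_congr rfl fun k _ => hdiag k,
      Fin.prod_univ_eq_prod_range
        (fun t : ℕ => ((n:ℝ) + 2 - t) * ((n:ℝ) + 3 - t) / (((n:ℝ) - t) * ((n:ℝ) + 1 - t))) n]
    calc ∏ t ∈ Finset.range n, ((n:ℝ) + 2 - t) * ((n:ℝ) + 3 - t) / (((n:ℝ) - t) * ((n:ℝ) + 1 - t))
        = ∏ j ∈ Finset.range n,
            (fun k : ℕ => (((k:ℝ)+3)*((k:ℝ)+4)/(((k:ℝ)+1)*((k:ℝ)+2)))) (n - 1 - j) := by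
          apply Finset.prod_congr rfl
          intro j hj
          rw [Finset.mem_range] at hj
          simp only
          have e : ((n - 1 - j : ℕ) : ℝ) = (n:ℝ) - 1 - (j:ℝ) := by
            rw [Nat.cast_sub (by omega), Nat.cast_sub (by omega), Nat.cast_one]
          rw [e]
          ring_nf
      _ = ∏ j ∈ Finset.range n, (((j:ℝ)+3)*((j:ℝ)+4)/(((j:ℝ)+1)*((j:ℝ)+2))) :=
          Finset.prod_range_reflect (fun k : ℕ => (((k:ℝ)+3)*((k:ℝ)+4)/(((k:ℝ)+1)*((k:ℝ)+2)))) n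
      _ = ((n:ℝ)+1)*((n:ℝ)+2)^2*((n:ℝ)+3)/12 := prod_tel n
  · intro i j hij
    have : (i:ℕ) < (j:ℕ) := hij
    simp only [Gm, Matrix.of_apply]
    rw [if_neg (by omega), if_neg (by omega), if_neg (by omega)]


/-- Determinant of the constant-weight discrete bilaplacian matrix of size
`(N-1) × (N-1)`: diagonal entries `6`, first off-diagonal `-4`, second
off-diagonal `1`. -/
theorem det_bilaplacian_constant (N : ℕ) (hN : 1 ≤ N) :
    (Matrix.of fun i j : Fin (N - 1) =>
        if (i : ℕ) = (j : ℕ) then (6 : ℝ)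
        else if (j : ℕ) = (i : ℕ) + 1 then -4
        else if (i : ℕ) = (j : ℕ) + 1 then -4
        else if (j : ℕ) = (i : ℕ) + 2 then 1
        else if (i : ℕ) = (j : ℕ) + 2 then 1
        else 0).det
      = (1 / 12 : ℝ) * N * (N + 1) ^ 2 * (N + 2) := by
  have hB : (Matrix.of fun i j : Fin (N - 1) =>
        if (i : ℕ) = (j : ℕ) then (6 : ℝ)
        else if (j : ℕ) = (i : ℕ) + 1 then -4
        else if (i : ℕ) = (j : ℕ) + 1 then -4
        else if (j : ℕ) = (i : ℕ) + 2 then 1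
        else if (i : ℕ) = (j : ℕ) + 2 then 1
        else 0) = Fm (N-1) * Gm (N-1) := by
    ext i j
    rw [mul_eq]
    rfl
  rw [hB, Matrix.det_mul, detF, detG, one_mul]
  have hc : ((N - 1 : ℕ) : ℝ) = (N : ℝ) - 1 := by
    rw [Nat.cast_sub hN, Nat.cast_one]
  rw [hc]
  ring
end

section
/- For d = 1 or d = 2 and 0 ≤ β < 1, with ω Rademacher disorder, the series Σ_{n=1}^∞ E[(2π Σ_{i=0}^{n-1}(1+βω_i)^{-1})^{-d/2}]·x^n diverges as x → 1⁻ for every ε > 0 scaling; consequently, for every ε > 0 the equation ε·Σ_{n=1}^∞ E[(2π Σ_{i=0}^{n-1}(1+βω_i)^{-1})^{-d/2}]·x^n = 1 has a solution x ∈ (0,1), i.e. the annealed critical point ε_c^a(β) = 0. -/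
/-! Almost surely `ω i = ±1`, so with `0 ≤ β < 1` each term `(1 + β ω i)⁻¹` lies in
`[1/2, (1 - β)⁻¹]`. For an exponent `e ∈ [-1, 0]` (here `e = -d/2`, which is where `d ≤ 2`
enters) the `n`-th coefficient of `G` then lies between `c / (n + 1)` and `1`, with
`c = (2π / (1 - β)) ^ e > 0`. The lower bound dominates `G x` by the harmonic series
`c · (-log (1 - x))`, which diverges as `x → 1⁻`; the upper bound makes `G` continuous on
`[0, 1)` with `G 0 = 0`, and the intermediate value theorem solves `G x = ε⁻¹`. -/

open MeasureTheory ProbabilityTheory Filter Finset Real Set Topology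

lemma ae_eq_one_or_eq_neg_one_of_map_eq {Ω : Type*} [MeasurableSpace Ω] {μ : Measure Ω}
    {X : Ω → ℝ} (hX : Measurable X)
    (hmap : μ.map X = (2 : ENNReal)⁻¹ • (Measure.dirac (1 : ℝ) + Measure.dirac (-1 : ℝ))) :
    ∀ᵐ a ∂μ, X a = 1 ∨ X a = -1 := by
  refine ae_of_ae_map (p := fun y => y = 1 ∨ y = -1) hX.aemeasurable ?_
  rw [hmap]
  refine Measure.ae_smul_measure (ae_add_measure_iff.mpr ⟨?_, ?_⟩) _ <;> simp [ae_dirac_eq]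

lemma inv_one_add_mul_mem_Icc {β s : ℝ} (hβ0 : 0 ≤ β) (hβ1 : β < 1) (hs : s = 1 ∨ s = -1) :
    (1 + β * s)⁻¹ ∈ Icc (1 / 2) (1 - β)⁻¹ := by
  rcases hs with rfl | rfl
  · exact ⟨by rw [one_div]; exact inv_anti₀ (by linarith) (by linarith),
      inv_anti₀ (by linarith) (by linarith)⟩
  · rw [mul_neg_one, ← sub_eq_add_neg]
    exact ⟨by rw [one_div]; exact inv_anti₀ (by linarith) (by linarith), le_rfl⟩

lemma sum_inv_one_add_mul_mem_Icc {β : ℝ} (hβ0 : 0 ≤ β) (hβ1 : β < 1) {s : ℕ → ℝ}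
    (hs : ∀ i, s i = 1 ∨ s i = -1) (n : ℕ) :
    ∑ i ∈ range n, (1 + β * s i)⁻¹ ∈ Icc ((n : ℝ) / 2) (n * (1 - β)⁻¹) := by
  have h := fun i (_ : i ∈ range n) => inv_one_add_mul_mem_Icc hβ0 hβ1 (hs i)
  constructor
  · simpa [div_eq_inv_mul, mul_comm] using card_nsmul_le_sum _ _ _ fun i hi => (h i hi).1
  · simpa using sum_le_card_nsmul _ _ _ fun i hi => (h i hi).2

lemma rpow_mem_Icc_of_le_mul {y B m e : ℝ} (hy : 1 ≤ y) (hyB : y ≤ B * m) (hm : 1 ≤ m)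
    (he : e ∈ Icc (-1 : ℝ) 0) : y ^ e ∈ Icc (B ^ e / m) 1 := by
  have hB : 0 < B := pos_of_mul_pos_left (by linarith : 0 < B * m) (by linarith : 0 ≤ m)
  refine ⟨?_, rpow_le_one_of_one_le_of_nonpos hy he.2⟩
  calc B ^ e / m = B ^ e * m ^ (-1 : ℝ) := by rw [rpow_neg_one, div_eq_mul_inv]
    _ ≤ B ^ e * m ^ e := by gcongr; exact he.1
    _ = (B * m) ^ e := (mul_rpow hB.le (by linarith)).symm
    _ ≤ y ^ e := rpow_le_rpow_of_nonpos (by linarith) hyB he.2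

lemma rpow_two_pi_mul_sum_inv_mem_Icc {β e : ℝ} (hβ0 : 0 ≤ β) (hβ1 : β < 1)
    (he : e ∈ Icc (-1 : ℝ) 0) {s : ℕ → ℝ} (hs : ∀ i, s i = 1 ∨ s i = -1) (n : ℕ) :
    (2 * π * ∑ i ∈ range (n + 1), (1 + β * s i)⁻¹) ^ e
      ∈ Icc ((2 * π / (1 - β)) ^ e / (n + 1)) 1 := by
  obtain ⟨hlow, hup⟩ := sum_inv_one_add_mul_mem_Icc hβ0 hβ1 hs (n + 1)
  push_cast at hlow hup
  refine rpow_mem_Icc_of_le_mul ?_ ?_ (by linarith [n.cast_nonneg (α := ℝ)]) he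
  · nlinarith [pi_gt_three, n.cast_nonneg (α := ℝ)]
  · calc 2 * π * ∑ i ∈ range (n + 1), (1 + β * s i)⁻¹
        ≤ 2 * π * ((n + 1) * (1 - β)⁻¹) := by gcongr
      _ = 2 * π / (1 - β) * (n + 1) := by ring

lemma integral_mem_Icc_of_ae_mem_Icc {Ω : Type*} [MeasurableSpace Ω] {μ : Measure Ω}
    [IsProbabilityMeasure μ] {f : Ω → ℝ} (hf : AEStronglyMeasurable f μ) {l u : ℝ}
    (h : ∀ᵐ a ∂μ, f a ∈ Icc l u) : ∫ a, f a ∂μ ∈ Icc l u := by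
  have hint : Integrable f μ := by
    refine Integrable.of_bound hf (max |l| |u|) ?_
    filter_upwards [h] with a ha
    exact abs_le_max_abs_abs ha.1 ha.2
  constructor
  · simpa using integral_mono_ae (integrable_const l) hint (h.mono fun a ha => ha.1)
  · simpa using integral_mono_ae hint (integrable_const u) (h.mono fun a ha => ha.2)

lemma integral_rpow_two_pi_mul_sum_inv_mem_Icc {Ω : Type*} [MeasurableSpace Ω] {μ : Measure Ω}
    [IsProbabilityMeasure μ] {ω : ℕ → Ω → ℝ} (hmeas : ∀ n, Measurable (ω n))
    (hdist : ∀ n, μ.map (ω n)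
      = (2 : ENNReal)⁻¹ • (Measure.dirac (1 : ℝ) + Measure.dirac (-1 : ℝ)))
    {β e : ℝ} (hβ0 : 0 ≤ β) (hβ1 : β < 1) (he : e ∈ Icc (-1 : ℝ) 0) (n : ℕ) :
    ∫ a, (2 * π * ∑ i ∈ range (n + 1), (1 + β * ω i a)⁻¹) ^ e ∂μ
      ∈ Icc ((2 * π / (1 - β)) ^ e / (n + 1)) 1 := by
  refine integral_mem_Icc_of_ae_mem_Icc (Measurable.aestronglyMeasurable (by fun_prop)) ?_
  filter_upwards [ae_all_iff.mpr fun i => ae_eq_one_or_eq_neg_one_of_map_eq (hmeas i) (hdist i)]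
    with a ha
  exact rpow_two_pi_mul_sum_inv_mem_Icc hβ0 hβ1 he ha n

section PowerSeries

variable {a : ℕ → ℝ} {C : ℝ}

lemma norm_mul_pow_succ_le (ha : ∀ n, |a n| ≤ C) {x r : ℝ} (hx : |x| ≤ r) (n : ℕ) :
    ‖a n * x ^ (n + 1)‖ ≤ C * r ^ (n + 1) := by
  have hC : 0 ≤ C := (abs_nonneg _).trans (ha 0)
  rw [norm_mul, norm_pow, Real.norm_eq_abs, Real.norm_eq_abs]
  gcongr
  exact ha n

lemma summable_const_mul_pow_succ {r : ℝ} (hr0 : 0 ≤ r) (hr : r < 1) :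
    Summable fun n : ℕ => C * r ^ (n + 1) :=
  ((summable_nat_add_iff 1).mpr (summable_geometric_of_lt_one hr0 hr)).mul_left C

lemma summable_mul_pow_succ_of_abs_le (ha : ∀ n, |a n| ≤ C) {x : ℝ} (hx : |x| < 1) :
    Summable fun n => a n * x ^ (n + 1) :=
  .of_norm_bounded (summable_const_mul_pow_succ (abs_nonneg x) hx)
    (norm_mul_pow_succ_le ha le_rfl)

lemma continuousOn_tsum_mul_pow_succ (ha : ∀ n, |a n| ≤ C) :
    ContinuousOn (fun x => ∑' n, a n * x ^ (n + 1)) (Ioo (-1) 1) := by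
  refine continuousOn_of_forall_continuousAt fun x hx => ?_
  obtain ⟨r, hxr, hr⟩ := exists_between (abs_lt.mpr hx)
  have hcont : ContinuousOn (fun x => ∑' n, a n * x ^ (n + 1)) (Icc (-r) r) :=
    continuousOn_tsum (fun n => by fun_prop)
      (summable_const_mul_pow_succ ((abs_nonneg x).trans hxr.le) hr)
      fun n y hy => norm_mul_pow_succ_le ha (abs_le.mpr hy) n
  obtain ⟨hxr₁, hxr₂⟩ := abs_lt.mp hxr
  exact hcont.continuousAt (Icc_mem_nhds hxr₁ hxr₂)

lemma mul_neg_log_one_sub_le_tsum_mul_pow_succ (ha : ∀ n, |a n| ≤ C) {c : ℝ}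
    (hc : ∀ n : ℕ, c / (n + 1) ≤ a n) {x : ℝ} (hx0 : 0 ≤ x) (hx1 : x < 1) :
    c * -log (1 - x) ≤ ∑' n, a n * x ^ (n + 1) := by
  have hx : |x| < 1 := by rwa [abs_of_nonneg hx0]
  have hlog := (hasSum_pow_div_log_of_abs_lt_one hx).mul_left c
  rw [← hlog.tsum_eq]
  refine hlog.summable.tsum_le_tsum (fun n => ?_) (summable_mul_pow_succ_of_abs_le ha hx)
  rw [← mul_div_assoc, mul_div_right_comm]
  gcongr
  exact hc n

lemma tendsto_neg_log_one_sub_nhdsLT_one : Tendsto (fun x : ℝ => -log (1 - x)) (𝓝[<] 1) atTop := by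
  refine tendsto_neg_atBot_atTop.comp (tendsto_log_nhdsGT_zero.comp ?_)
  have hmaps : MapsTo (fun x : ℝ => 1 - x) (Iio 1) (Ioi 0) :=
    fun x (hx : x < 1) => show 0 < 1 - x from sub_pos.mpr hx
  simpa using (continuous_sub_left (1 : ℝ)).continuousWithinAt.tendsto_nhdsWithin (x := 1) hmaps

lemma tendsto_tsum_mul_pow_succ_atTop (ha : ∀ n, |a n| ≤ C) {c : ℝ} (hc0 : 0 < c)
    (hc : ∀ n : ℕ, c / (n + 1) ≤ a n) :
    Tendsto (fun x => ∑' n, a n * x ^ (n + 1)) (𝓝[<] 1) atTop := by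
  refine tendsto_atTop_mono' _ ?_ (tendsto_neg_log_one_sub_nhdsLT_one.const_mul_atTop hc0)
  filter_upwards [Ioo_mem_nhdsLT zero_lt_one] with x hx
  exact mul_neg_log_one_sub_le_tsum_mul_pow_succ ha hc hx.1.le hx.2

end PowerSeries

lemma exists_mem_Ioo_eq_of_tendsto_atTop {f : ℝ → ℝ} {a b y : ℝ} (hab : a < b)
    (hf : ContinuousOn f (Ico a b)) (htop : Tendsto f (𝓝[<] b) atTop) (hy : f a < y) :
    ∃ x ∈ Ioo a b, f x = y := by
  obtain ⟨r, hry, hr⟩ :=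
    ((htop.eventually_ge_atTop y).and (Ioo_mem_nhdsLT hab)).exists
  obtain ⟨x, hx, hfx⟩ :=
    intermediate_value_Ioc hr.1.le (hf.mono (Icc_subset_Ico_right hr.2)) ⟨hy, hry⟩
  exact ⟨x, ⟨hx.1, hx.2.trans_lt hr.2⟩, hfx⟩

theorem annealed_critical_point_zero_low_dim_general {Ω : Type*} [MeasurableSpace Ω]
    (μ : Measure Ω) [IsProbabilityMeasure μ]
    (ω : ℕ → Ω → ℝ) (hmeas : ∀ n, Measurable (ω n))
    (hdist : ∀ n, μ.map (ω n)
      = (2 : ENNReal)⁻¹ • (Measure.dirac (1 : ℝ) + Measure.dirac (-1 : ℝ)))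
    (β : ℝ) (hβ0 : 0 ≤ β) (hβ1 : β < 1) (d : ℕ) (hd : d = 1 ∨ d = 2)
    (G : ℝ → ℝ)
    (hG : ∀ x : ℝ, G x = ∑' n : ℕ,
      (∫ a, (2 * π * ∑ i ∈ Finset.range (n + 1), (1 + β * ω i a)⁻¹)
          ^ (-(d : ℝ) / 2) ∂μ) * x ^ (n + 1)) :
    Tendsto G (nhdsWithin 1 (Set.Iio 1)) atTop ∧
    ∀ ε : ℝ, 0 < ε → ∃ x ∈ Set.Ioo (0 : ℝ) 1, ε * G x = 1 := by
  have he : -(d : ℝ) / 2 ∈ Icc (-1 : ℝ) 0 := by rcases hd with rfl | rfl <;> norm_num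
  set c := (2 * π / (1 - β)) ^ (-(d : ℝ) / 2)
  set coeff : ℕ → ℝ := fun n =>
    ∫ a, (2 * π * ∑ i ∈ range (n + 1), (1 + β * ω i a)⁻¹) ^ (-(d : ℝ) / 2) ∂μ
  have hcoeff : ∀ n : ℕ, coeff n ∈ Icc (c / (n + 1)) 1 :=
    integral_rpow_two_pi_mul_sum_inv_mem_Icc hmeas hdist hβ0 hβ1 he
  have hc : 0 < c := by positivity
  have habs n : |coeff n| ≤ 1 :=
    abs_le.mpr ⟨by linarith [(hcoeff n).1, div_pos hc (n.cast_add_one_pos (α := ℝ))], (hcoeff n).2⟩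
  obtain rfl : G = fun x => ∑' n, coeff n * x ^ (n + 1) := funext hG
  have htop := tendsto_tsum_mul_pow_succ_atTop habs hc fun n => (hcoeff n).1
  refine ⟨htop, fun ε hε => ?_⟩
  obtain ⟨x, hx, hGx⟩ := exists_mem_Ioo_eq_of_tendsto_atTop zero_lt_one
    ((continuousOn_tsum_mul_pow_succ habs).mono (Ico_subset_Ioo_left (by norm_num))) htop
    (y := ε⁻¹) (by simpa using hε)
  exact ⟨x, hx, by simp only [hGx, mul_inv_cancel₀ hε.ne']⟩

/-- For `d = 1` or `d = 2` with Rademacher disorder, the annealed generating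
function blows up at `x → 1⁻`, so for every `ε > 0` the renewal equation
`ε·Σ_n E[(2π Σ_{i<n}(1+βω_i)⁻¹)^{-d/2}]·xⁿ = 1` has a solution `x ∈ (0,1)`;
hence the annealed critical point vanishes. -/
theorem annealed_critical_point_zero_low_dim {Ω : Type*} [MeasurableSpace Ω]
    (μ : Measure Ω) [IsProbabilityMeasure μ]
    (ω : ℕ → Ω → ℝ) (hmeas : ∀ n, Measurable (ω n))
    (hindep : iIndepFun ω μ)
    (hdist : ∀ n, μ.map (ω n)
      = (2 : ENNReal)⁻¹ • (Measure.dirac (1 : ℝ) + Measure.dirac (-1 : ℝ)))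
    (β : ℝ) (hβ0 : 0 ≤ β) (hβ1 : β < 1) (d : ℕ) (hd : d = 1 ∨ d = 2)
    (G : ℝ → ℝ)
    (hG : ∀ x : ℝ, G x = ∑' n : ℕ,
      (∫ a, (2 * π * ∑ i ∈ Finset.range (n + 1), (1 + β * ω i a)⁻¹)
          ^ (-(d : ℝ) / 2) ∂μ) * x ^ (n + 1)) :
    Tendsto G (nhdsWithin 1 (Set.Iio 1)) atTop ∧
    ∀ ε : ℝ, 0 < ε → ∃ x ∈ Set.Ioo (0 : ℝ) 1, ε * G x = 1 :=
  annealed_critical_point_zero_low_dim_general μ ω hmeas hdist β hβ0 hβ1 d hd G hG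
end
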